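/- arXiv:2306.07897 — 4 statements merged into one kernel-verified Lean document; each statement's English description precedes it below -/
import Mathlib

section
/- Let n ≥ 2 and let c ∈ ℂ with c ≠ 0, c² ≠ 4. Then the system of polynomial equations c·u + v + u·(u²+v²)^{n-1} = 0 and -u + v·(u²+v²)^{n-1} = 0 has exactly 4n−3 distinct solutions (u,v) ∈ ℂ². -/
/-!
Put `w = u² + v²`. The second equation gives `u = v wᵏ` with `k = n - 1`, and the first then
becomes `v (w²ᵏ + c wᵏ + 1) = 0`. Apart from the origin, `wᵏ` is therefore one of the two distinct
nonzero roots of `t² + c t + 1` (this is where `c² ≠ 4` enters), which leaves `2k` values of `w`;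
and `w = u² + v² = v² (w²ᵏ + 1) = -c v² wᵏ` leaves two values of `v` for each of them (this is
where `c ≠ 0` enters). Altogether there are `1 + 2 · 2k = 4n - 3` solutions.
-/

open Polynomial Finset

section RootCounting

variable {K : Type*} [Field K] [IsAlgClosed K] [CharZero K]

theorem card_nthRootsFinset_of_ne_zero {k : ℕ} (hk : k ≠ 0) {a : K} (ha : a ≠ 0) :
    #(nthRootsFinset k a) = k := by
  classical
  have : NeZero (k : K) := ⟨Nat.cast_ne_zero.2 hk⟩
  obtain ⟨ζ, hζ⟩ := HasEnoughRootsOfUnity.exists_primitiveRoot K k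
  rw [nthRootsFinset, Multiset.toFinset_card_of_nodup (hζ.nthRoots_nodup ha), hζ.card_nthRoots,
    if_pos (IsAlgClosed.exists_pow_nat_eq a (Nat.pos_of_ne_zero hk))]

theorem exists_ne_roots_sq_add_mul_add_one {c : K} (hc2 : c ^ 2 ≠ 4) :
    ∃ α β : K, α ≠ β ∧ ∀ t : K, t ^ 2 + c * t + 1 = 0 ↔ t = α ∨ t = β := by
  obtain ⟨s, hs⟩ := IsAlgClosed.exists_eq_mul_self (discrim 1 c 1)
  have hs0 : s ≠ 0 := by
    rintro rfl
    exact hc2 (by rw [discrim] at hs; linear_combination hs)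
  refine ⟨(-c + s) / 2, (-c - s) / 2, ?_, fun t => ?_⟩
  · intro h
    exact hs0 (by linear_combination h)
  · simpa [sq] using quadratic_eq_zero_iff one_ne_zero hs t

theorem exists_finset_pow_roots_sq_add_mul_add_one {k : ℕ} (hk : k ≠ 0) {c : K}
    (hc2 : c ^ 2 ≠ 4) :
    ∃ Z : Finset K, #Z = 2 * k ∧ ∀ w, w ∈ Z ↔ (w ^ k) ^ 2 + c * w ^ k + 1 = 0 := by
  classical
  obtain ⟨α, β, hαβ, hroots⟩ := exists_ne_roots_sq_add_mul_add_one hc2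
  have hne_zero : ∀ t, t ^ 2 + c * t + 1 = 0 → t ≠ 0 := by
    rintro t ht rfl
    simp at ht
  have hα := hne_zero α ((hroots α).2 (Or.inl rfl))
  have hβ := hne_zero β ((hroots β).2 (Or.inr rfl))
  have hk0 : 0 < k := Nat.pos_of_ne_zero hk
  refine ⟨nthRootsFinset k α ∪ nthRootsFinset k β, ?_, fun w => ?_⟩
  · have hdisj : Disjoint (nthRootsFinset k α) (nthRootsFinset k β) := by
      rw [Finset.disjoint_left]
      intro w hwα hwβ
      rw [mem_nthRootsFinset hk0] at hwα hwβ
      exact hαβ (hwα.symm.trans hwβ)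
    rw [card_union_of_disjoint hdisj, card_nthRootsFinset_of_ne_zero hk hα,
      card_nthRootsFinset_of_ne_zero hk hβ, two_mul]
  · rw [mem_union, mem_nthRootsFinset hk0, mem_nthRootsFinset hk0, hroots]

end RootCounting

namespace PowerSystem

variable {R : Type*} [CommRing R]

def solutions (c : R) (k : ℕ) : Set (R × R) :=
  {p | c * p.1 + p.2 + p.1 * (p.1 ^ 2 + p.2 ^ 2) ^ k = 0 ∧
    -p.1 + p.2 * (p.1 ^ 2 + p.2 ^ 2) ^ k = 0}

/-- `(w, v)` parametrises the solution `(v wᵏ, v)`, for which `w = u² + v²`. -/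
def params (c : R) (k : ℕ) : Set (R × R) :=
  {q | (q.1 ^ k) ^ 2 + c * q.1 ^ k + 1 = 0 ∧ q.1 = -c * q.2 ^ 2 * q.1 ^ k}

def ofParam (k : ℕ) (q : R × R) : R × R :=
  (q.2 * q.1 ^ k, q.2)

variable {c : R} {k : ℕ}

theorem sq_add_sq_ofParam {q : R × R} (hq : q ∈ params c k) :
    (ofParam k q).1 ^ 2 + (ofParam k q).2 ^ 2 = q.1 := by
  obtain ⟨hquad, hw⟩ := hq
  simp only [ofParam]
  linear_combination q.2 ^ 2 * hquad - hw

theorem injOn_ofParam : Set.InjOn (ofParam k) (params c k) := by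
  refine Set.LeftInvOn.injOn (f₁' := fun p => (p.1 ^ 2 + p.2 ^ 2, p.2)) fun q hq => ?_
  simp only [sq_add_sq_ofParam hq]
  rfl

theorem zero_notMem_image_ofParam [Nontrivial R] (hk : k ≠ 0) :
    (0 : R × R) ∉ ofParam k '' params c k := by
  rintro ⟨⟨w, v⟩, ⟨hquad, hw⟩, h0⟩
  obtain rfl : v = 0 := congrArg Prod.snd h0
  obtain rfl : w = 0 := by simpa using hw
  simp [zero_pow hk] at hquad

theorem solutions_eq_insert_image_ofParam [NoZeroDivisors R] :
    solutions c k = insert 0 (ofParam k '' params c k) := by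
  ext ⟨u, v⟩
  constructor
  · rintro ⟨h1, h2⟩
    set w := u ^ 2 + v ^ 2
    have hu : u = v * w ^ k := by linear_combination -h2
    have hv_quad : v * ((w ^ k) ^ 2 + c * w ^ k + 1) = 0 := by
      linear_combination h1 + (c + w ^ k) * h2
    rcases mul_eq_zero.1 hv_quad with rfl | hquad
    · left
      simp [hu]
    · right
      refine ⟨(w, v), ⟨hquad, ?_⟩, by simp [ofParam, hu]⟩
      linear_combination (u + v * w ^ k) * hu + v ^ 2 * hquad
  · rintro (h0 | ⟨q, hq, hqp⟩)
    · simp [(Prod.mk_eq_zero.1 h0).1, (Prod.mk_eq_zero.1 h0).2, solutions]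
    · rw [← hqp]
      refine ⟨?_, ?_⟩ <;> rw [sq_add_sq_ofParam hq] <;> simp only [ofParam]
      · linear_combination q.2 * hq.1
      · ring

section AlgClosed

variable {K : Type*} [Field K] [IsAlgClosed K] [CharZero K] {c : K} {k : ℕ}

theorem encard_params (hk : k ≠ 0) (hc : c ≠ 0) (hc2 : c ^ 2 ≠ 4) :
    (params c k).encard = (4 * k : ℕ) := by
  classical
  obtain ⟨Z, hZcard, hZ⟩ := exists_finset_pow_roots_sq_add_mul_add_one hk hc2
  have hZ0 : ∀ w ∈ Z, w ^ k ≠ 0 := by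
    intro w hw h0
    have hquad := (hZ w).1 hw
    simp [h0] at hquad
  let fiber (w : K) : Finset (K × K) := {w} ×ˢ nthRootsFinset 2 (-w / (c * w ^ k))
  have hP : params c k = ↑(Z.biUnion fiber) := by
    ext ⟨w, v⟩
    simp only [params, Set.mem_ofPred_eq, fiber, coe_biUnion, coe_product, coe_singleton,
      Set.mem_iUnion, Set.mem_prod, Set.mem_singleton_iff, mem_coe,
      mem_nthRootsFinset two_pos, exists_prop, hZ, and_left_comm, exists_eq_left']
    refine and_congr_right fun hquad => ?_
    have hw : w ^ k ≠ 0 := hZ0 w ((hZ w).2 hquad)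
    rw [eq_div_iff (mul_ne_zero hc hw)]
    constructor <;> intro h <;> linear_combination h
  have hfiber : ∀ w ∈ Z, #(fiber w) = 2 := by
    intro w hw
    have hw0 : w ≠ 0 := ne_zero_pow hk (hZ0 w hw)
    rw [card_product, card_singleton, one_mul, card_nthRootsFinset_of_ne_zero two_ne_zero
      (div_ne_zero (neg_ne_zero.2 hw0) (mul_ne_zero hc (hZ0 w hw)))]
  have hdisj : (Z : Set K).PairwiseDisjoint fiber := by
    intro w _ w' _ hne
    simp only [Function.onFun, fiber, disjoint_left, mem_product, mem_singleton]
    rintro p ⟨hpw, -⟩ ⟨hpw', -⟩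
    exact hne (hpw.symm.trans hpw')
  rw [hP, Set.encard_coe_eq_coe_finsetCard, card_biUnion hdisj, sum_congr rfl hfiber,
    sum_const, hZcard, smul_eq_mul]
  ring_nf

theorem encard_solutions (hk : k ≠ 0) (hc : c ≠ 0) (hc2 : c ^ 2 ≠ 4) :
    (solutions c k).encard = (4 * k + 1 : ℕ) := by
  rw [solutions_eq_insert_image_ofParam,
    Set.encard_insert_of_notMem (zero_notMem_image_ofParam hk), injOn_ofParam.encard_image,
    encard_params hk hc hc2]
  rfl

end AlgClosed

end PowerSystem

theorem root_count_4n_sub_3 (n : ℕ) (hn : 2 ≤ n) (c : ℂ) (hc : c ≠ 0) (hc2 : c ^ 2 ≠ 4) :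
    {p : ℂ × ℂ | c * p.1 + p.2 + p.1 * (p.1 ^ 2 + p.2 ^ 2) ^ (n - 1) = 0 ∧
        -p.1 + p.2 * (p.1 ^ 2 + p.2 ^ 2) ^ (n - 1) = 0}.ncard = 4 * n - 3 := by
  change (PowerSystem.solutions c (n - 1)).ncard = 4 * n - 3
  rw [Set.ncard_def, PowerSystem.encard_solutions (by omega) hc hc2, ENat.toNat_natCast]
  omega
end

section
/- Let l ≥ 1, and suppose a binomial p = z_l^a z_{l+1}^b z_{l+2}^c − ∏_{q ≥ l+1} z_q^{d_q} with a > 0 and a+b+c = Σ d_q lies in the kernel of the monomial substitution z₀ ↦ s, z₁ ↦ su, z₂ ↦ sv, z_{2k−1} ↦ su^{2k−1}, z_{2k} ↦ svu^{2k−2}. Then p = 0 is impossible unless some variable z_m with m ≥ l+3 appears in one of the two monomials; i.e., no nonzero binomial in the toric ideal has both monomials supported only on {z_l, z_{l+1}, z_{l+2}} with l ≥ 1. -/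
open MvPolynomial

/-- The monomial substitution `z₀ ↦ s, z₁ ↦ su, z₂ ↦ sv, z_{2k-1} ↦ su^{2k-1},
z_{2k} ↦ svu^{2k-2}`, where `s = X 0`, `u = X 1`, `v = X 2`. -/
noncomputable def toricSubst (i : ℕ) : MvPolynomial (Fin 3) ℂ :=
  if i = 0 then X 0
  else if Odd i then X 0 * X 1 ^ i
  else X 0 * X 2 * X 1 ^ (i - 2)

/-!
The exponent vectors of `z_l`, `z_{l+1}`, `z_{l+2}` are linearly independent, so there is a
character of the torus `(ℂˣ)³` that is trivial on the images of `z_{l+1}` and `z_{l+2}` but takes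
a value `n > 1` on the image of `z_l`. Evaluating both sides of the binomial relation at this
point, a right-hand side supported on `{z_{l+1}, z_{l+2}}` gives `n ^ a = 1`, so `a = 0`.
-/

theorem eval_toricSubst_of_odd (s u v : ℂ) {i : ℕ} (hi : Odd i) :
    eval ![s, u, v] (toricSubst i) = s * u ^ i := by
  simp [toricSubst, hi, hi.pos.ne']

theorem eval_toricSubst_of_even (s u v : ℂ) {i : ℕ} (hi : Even i) (h0 : i ≠ 0) :
    eval ![s, u, v] (toricSubst i) = s * v * u ^ (i - 2) := by
  simp [toricSubst, h0, Nat.not_odd_iff_even.mpr hi]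

theorem exists_eval_toricSubst_separating (l : ℕ) :
    ∃ x : Fin 3 → ℂ, ∃ n : ℕ, 1 < n ∧ eval x (toricSubst l) = n ∧
      eval x (toricSubst (l + 1)) = 1 ∧ eval x (toricSubst (l + 2)) = 1 := by
  rcases Nat.even_or_odd' l with ⟨k, rfl | rfl⟩
  · rcases k with _ | k
    · refine ⟨![2, 2⁻¹, 2⁻¹], 2, one_lt_two, by simp [toricSubst], ?_, ?_⟩
      · simp [eval_toricSubst_of_odd _ _ _ odd_one]
      · simp [eval_toricSubst_of_even _ _ _ even_two two_ne_zero]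
    · refine ⟨![2 ^ (2 * k + 3), 2⁻¹, 2⁻¹], 4, by norm_num, ?_, ?_, ?_⟩
      · rw [eval_toricSubst_of_even _ _ _ (by simp) (by omega),
          show 2 * (k + 1) - 2 = 2 * k by omega]
        simp only [inv_pow]
        field_simp
        ring
      · rw [eval_toricSubst_of_odd _ _ _ (by simp)]
        simp only [inv_pow]
        field_simp
        ring
      · rw [eval_toricSubst_of_even _ _ _ (by simp [Nat.even_add]) (by omega),
          show 2 * (k + 1) + 2 - 2 = 2 * k + 2 by omega]
        simp only [inv_pow]
        field_simp
        ring
  · refine ⟨![2 ^ (2 * k + 3), 2⁻¹, 2⁻¹ ^ 3], 4, by norm_num, ?_, ?_, ?_⟩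
    · rw [eval_toricSubst_of_odd _ _ _ (by simp)]
      simp only [inv_pow]
      field_simp
      ring
    · rw [eval_toricSubst_of_even _ _ _ (by simp [Nat.even_add]) (by omega),
        show 2 * k + 1 + 1 - 2 = 2 * k by omega]
      simp only [inv_pow]
      field_simp
      ring
    · rw [eval_toricSubst_of_odd _ _ _ (by simp [Nat.odd_add])]
      simp only [inv_pow]
      field_simp

theorem support_must_exceed_general (l : ℕ) (a b c : ℕ) (ha : 0 < a) (d : ℕ →₀ ℕ)
    (hsupp : ∀ q ∈ d.support, l + 1 ≤ q)
    (hker : toricSubst l ^ a * toricSubst (l + 1) ^ b * toricSubst (l + 2) ^ c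
      = d.prod fun q e => toricSubst q ^ e) :
    ∃ q ∈ d.support, l + 3 ≤ q := by
  by_contra! hcon
  obtain ⟨x, n, hn, hxl, hx1, hx2⟩ := exists_eval_toricSubst_separating l
  have hprod : eval x (d.prod fun q e => toricSubst q ^ e) = 1 := by
    rw [map_finsuppProd]
    refine Finset.prod_eq_one fun q hq => ?_
    obtain rfl | rfl : q = l + 1 ∨ q = l + 2 := by
      have := hsupp q hq
      have := hcon q hq
      omega
    · simp [hx1]
    · simp [hx2]
  have hpow : (n : ℂ) ^ a = 1 := by
    simpa [hxl, hx1, hx2, hprod] using congrArg (eval x) hker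
  have hpow_nat : n ^ a = 1 := by exact_mod_cast hpow
  rw [Nat.pow_eq_one] at hpow_nat
  omega

theorem support_must_exceed (l : ℕ) (hl : 1 ≤ l) (a b c : ℕ) (ha : 0 < a) (d : ℕ →₀ ℕ)
    (hsupp : ∀ q ∈ d.support, l + 1 ≤ q)
    (hdeg : a + b + c = d.sum fun _ e => e)
    (hker : toricSubst l ^ a * toricSubst (l + 1) ^ b * toricSubst (l + 2) ^ c
      = d.prod fun q e => toricSubst q ^ e) :
    ∃ q ∈ d.support, l + 3 ≤ q :=
  support_must_exceed_general l a b c ha d hsupp hker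
end

section
/- The toric ideal of the monomial map (s,s',x,y) ↦ (s, sx², sy, s', s'x, s'y), i.e., the kernel of ℂ[z₀,z₁,z₂,w₀,w₁,w₂] → ℂ[s,s',x,y] sending z₀↦s, z₁↦sx², z₂↦sy, w₀↦s', w₁↦s'x, w₂↦s'y, contains the binomials z₂w₀ − z₀w₂, z₂w₁² − z₁w₀w₂, z₁w₀² − z₀w₁². Moreover, the ideal generated by these three binomials together with z₀ − w₀ is not radical. -/
open MvPolynomial

/-- The substitution `z₀ ↦ s, z₁ ↦ sx², z₂ ↦ sy, w₀ ↦ s', w₁ ↦ s'x, w₂ ↦ s'y`,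
where the target variables are `s = X 0, s' = X 1, x = X 2, y = X 3` and the source
variables are `z₀ = X 0, z₁ = X 1, z₂ = X 2, w₀ = X 3, w₁ = X 4, w₂ = X 5`. -/
noncomputable def fiberSubst : Fin 6 → MvPolynomial (Fin 4) ℂ :=
  ![X 0, X 0 * X 2 ^ 2, X 0 * X 3, X 1, X 1 * X 2, X 1 * X 3]

/-- Evaluation `z₂ ↦ 1, w₁ ↦ ε`, all other variables to `0`, into the dual numbers. -/
noncomputable def epsEval : Fin 6 → DualNumber ℂ :=
  ![0, 0, 1, 0, DualNumber.eps, 0]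


private lemma fs0 : fiberSubst 0 = X 0 := rfl
private lemma fs1 : fiberSubst 1 = X 0 * X 2 ^ 2 := rfl
private lemma fs2 : fiberSubst 2 = X 0 * X 3 := rfl
private lemma fs3 : fiberSubst 3 = X 1 := rfl
private lemma fs4 : fiberSubst 4 = X 1 * X 2 := rfl
private lemma fs5 : fiberSubst 5 = X 1 * X 3 := rfl

private lemma ee0 : epsEval 0 = 0 := rfl
private lemma ee1 : epsEval 1 = 0 := rfl
private lemma ee2 : epsEval 2 = 1 := rfl
private lemma ee3 : epsEval 3 = 0 := rfl
private lemma ee4 : epsEval 4 = DualNumber.eps := rfl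
private lemma ee5 : epsEval 5 = 0 := rfl

theorem toric_ideal_nonradical :
    (aeval fiberSubst (X 2 * X 3 - X 0 * X 5 : MvPolynomial (Fin 6) ℂ) = 0 ∧
     aeval fiberSubst (X 2 * X 4 ^ 2 - X 1 * X 3 * X 5 : MvPolynomial (Fin 6) ℂ) = 0 ∧
     aeval fiberSubst (X 1 * X 3 ^ 2 - X 0 * X 4 ^ 2 : MvPolynomial (Fin 6) ℂ) = 0) ∧
    ¬ (Ideal.span {(X 2 * X 3 - X 0 * X 5 : MvPolynomial (Fin 6) ℂ),
        X 2 * X 4 ^ 2 - X 1 * X 3 * X 5,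
        X 1 * X 3 ^ 2 - X 0 * X 4 ^ 2,
        X 0 - X 3}).IsRadical := by
  constructor
  · refine ⟨?_, ?_, ?_⟩ <;>
    · simp only [map_sub, map_mul, map_pow, aeval_X, fs0, fs1, fs2, fs3, fs4, fs5]
      ring
  · intro hrad
    set g1 : MvPolynomial (Fin 6) ℂ := X 2 * X 3 - X 0 * X 5 with hg1
    set g2 : MvPolynomial (Fin 6) ℂ := X 2 * X 4 ^ 2 - X 1 * X 3 * X 5 with hg2
    set g3 : MvPolynomial (Fin 6) ℂ := X 1 * X 3 ^ 2 - X 0 * X 4 ^ 2 with hg3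
    set g4 : MvPolynomial (Fin 6) ℂ := X 0 - X 3 with hg4
    set J := Ideal.span {g1, g2, g3, g4} with hJ
    -- the witness f = z₂²w₁ - z₂w₁w₂
    set f : MvPolynomial (Fin 6) ℂ := X 2 ^ 2 * X 4 - X 2 * X 4 * X 5 with hf
    have h1 : g1 ∈ J := Ideal.subset_span (by simp)
    have h2 : g2 ∈ J := Ideal.subset_span (by simp)
    have h4 : g4 ∈ J := Ideal.subset_span (by simp)
    have hsq : f ^ 2 ∈ J := by
      have : f ^ 2 =
          (X 1 * X 2 ^ 2 * X 5 - X 1 * X 2 * X 5 ^ 2) * g1 +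
          (X 2 ^ 3 - 2 * X 2 ^ 2 * X 5 + X 2 * X 5 ^ 2) * g2 +
          (X 1 * X 2 ^ 2 * X 5 ^ 2 - X 1 * X 2 * X 5 ^ 3) * g4 := by
        rw [hg1, hg2, hg4, hf]; ring
      rw [this]
      exact add_mem (add_mem (Ideal.mul_mem_left _ _ h1) (Ideal.mul_mem_left _ _ h2))
        (Ideal.mul_mem_left _ _ h4)
    have hfJ : f ∈ J := hrad ⟨2, hsq⟩
    -- evaluate at z₂ = 1, w₁ = ε, rest 0
    have hker : J ≤ RingHom.ker (aeval (R := ℂ) epsEval).toRingHom := by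
      rw [hJ, Ideal.span_le]
      intro p hp
      simp only [Set.mem_insert_iff, Set.mem_singleton_iff] at hp
      rcases hp with rfl | rfl | rfl | rfl <;>
      · simp only [SetLike.mem_coe, RingHom.mem_ker, AlgHom.toRingHom_eq_coe, RingHom.coe_coe,
          map_sub, map_mul, map_pow, aeval_X, ee0, ee1, ee2, ee3, ee4, ee5, hg1, hg2, hg3, hg4]
        first
        | ring1
        | (rw [pow_two, DualNumber.eps_mul_eps]; ring1)
    have := hker hfJ
    simp only [RingHom.mem_ker, AlgHom.toRingHom_eq_coe, RingHom.coe_coe, hf, map_sub, map_mul,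
      map_pow, aeval_X, ee0, ee1, ee2, ee3, ee4, ee5] at this
    rw [show (1 : DualNumber ℂ) ^ 2 * DualNumber.eps - 1 * DualNumber.eps * 0
        = DualNumber.eps by ring] at this
    have hsnd := congrArg TrivSqZeroExt.snd this
    simp [DualNumber.snd_eps] at hsnd
end

section
/- Let I₁ = ⟨z₁z₄ − z₃z₂, z²z₃ − z₁³, z²z₄ − z₁²z₂⟩ in ℂ[z, z₁, z₂, z₃, z₄] and I₂ = ⟨w₁w₄ − w₃w₂, z²w₃ − w₁³, z²w₄ − w₁²w₂⟩ in ℂ[z, w₁, w₂, w₃, w₄]. Then the element z₂³z₃²w₄ − z₄³w₁²w₂ lies in the ideal I₁ + I₂ of ℂ[z, z₁,...,z₄, w₁,...,w₄]. -/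
open MvPolynomial

-- Variables: z = X 0, z₁..z₄ = X 1..X 4, w₁..w₄ = X 5..X 8.
theorem membership_in_sum_of_ideals :
    (X 2 ^ 3 * X 3 ^ 2 * X 8 - X 4 ^ 3 * X 5 ^ 2 * X 6 : MvPolynomial (Fin 9) ℂ) ∈
      Ideal.span ({X 1 * X 4 - X 3 * X 2,
                   X 0 ^ 2 * X 3 - X 1 ^ 3,
                   X 0 ^ 2 * X 4 - X 1 ^ 2 * X 2,
                   X 5 * X 8 - X 7 * X 6,
                   X 0 ^ 2 * X 7 - X 5 ^ 3,
                   X 0 ^ 2 * X 8 - X 5 ^ 2 * X 6} : Set (MvPolynomial (Fin 9) ℂ)) := by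
  have h1 : (X 1 * X 4 - X 3 * X 2 : MvPolynomial (Fin 9) ℂ) ∈
      Ideal.span ({X 1 * X 4 - X 3 * X 2, X 0 ^ 2 * X 3 - X 1 ^ 3,
        X 0 ^ 2 * X 4 - X 1 ^ 2 * X 2, X 5 * X 8 - X 7 * X 6,
        X 0 ^ 2 * X 7 - X 5 ^ 3, X 0 ^ 2 * X 8 - X 5 ^ 2 * X 6} :
        Set (MvPolynomial (Fin 9) ℂ)) := Ideal.subset_span (by simp)
  have h3 : (X 0 ^ 2 * X 4 - X 1 ^ 2 * X 2 : MvPolynomial (Fin 9) ℂ) ∈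
      Ideal.span ({X 1 * X 4 - X 3 * X 2, X 0 ^ 2 * X 3 - X 1 ^ 3,
        X 0 ^ 2 * X 4 - X 1 ^ 2 * X 2, X 5 * X 8 - X 7 * X 6,
        X 0 ^ 2 * X 7 - X 5 ^ 3, X 0 ^ 2 * X 8 - X 5 ^ 2 * X 6} :
        Set (MvPolynomial (Fin 9) ℂ)) := Ideal.subset_span (by simp)
  have h6 : (X 0 ^ 2 * X 8 - X 5 ^ 2 * X 6 : MvPolynomial (Fin 9) ℂ) ∈
      Ideal.span ({X 1 * X 4 - X 3 * X 2, X 0 ^ 2 * X 3 - X 1 ^ 3,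
        X 0 ^ 2 * X 4 - X 1 ^ 2 * X 2, X 5 * X 8 - X 7 * X 6,
        X 0 ^ 2 * X 7 - X 5 ^ 3, X 0 ^ 2 * X 8 - X 5 ^ 2 * X 6} :
        Set (MvPolynomial (Fin 9) ℂ)) := Ideal.subset_span (by simp)
  have key : (X 2 ^ 3 * X 3 ^ 2 * X 8 - X 4 ^ 3 * X 5 ^ 2 * X 6 : MvPolynomial (Fin 9) ℂ) =
      X 4 ^ 3 * (X 0 ^ 2 * X 8 - X 5 ^ 2 * X 6)
      - X 4 ^ 2 * X 8 * (X 0 ^ 2 * X 4 - X 1 ^ 2 * X 2)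
      - X 2 * X 8 * ((X 1 * X 4 - X 3 * X 2) + 2 * X 2 * X 3) * (X 1 * X 4 - X 3 * X 2) := by
    ring
  rw [key]
  exact sub_mem (sub_mem (Ideal.mul_mem_left _ _ h6) (Ideal.mul_mem_left _ _ h3))
    (Ideal.mul_mem_left _ _ h1)
end
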